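/- For all real numbers x ≥ 0 and a ≥ 1, arsinh(x/a) ≤ √(πx/2). -/

import Mathlib

open Real MeasureTheory

/-- Inverse hyperbolic tangent on `(-1, 1)`. -/
noncomputable def Real.artanhAux (x : ℝ) : ℝ := (1 / 2) * Real.log ((1 + x) / (1 - x))

/-- Matrix-vector multiplication viewed as a map between Euclidean spaces. -/
noncomputable def mulVecE {d d' : ℕ} (P : Matrix (Fin d') (Fin d) ℝ)
    (x : EuclideanSpace ℝ (Fin d)) : EuclideanSpace ℝ (Fin d') :=
  (EuclideanSpace.equiv (Fin d') ℝ).symm (P.mulVec (EuclideanSpace.equiv (Fin d) ℝ x))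

/-- Möbius matrix multiplication `P^{⊗_s} x` on the Poincaré ball of radius `s`.
When `P.mulVec x = 0` this evaluates to `0`, as required. -/
noncomputable def mobiusMat {d d' : ℕ} (s : ℝ) (P : Matrix (Fin d') (Fin d) ℝ)
    (x : EuclideanSpace ℝ (Fin d)) : EuclideanSpace ℝ (Fin d') :=
  (s * Real.tanh ((‖mulVecE P x‖ / ‖x‖) * Real.artanhAux (‖x‖ / s)) / ‖mulVecE P x‖) • mulVecE P x

/-- Frobenius norm of a real matrix. -/
noncomputable def frobNorm {m n : ℕ} (P : Matrix (Fin m) (Fin n) ℝ) : ℝ :=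
  Real.sqrt (∑ i, ∑ j, (P i j) ^ 2)

/-- Lorentz gamma factor `γ_x = 1/√(1 - ‖x‖²/s²)`. -/
noncomputable def lorentzGamma {d : ℕ} (s : ℝ) (x : EuclideanSpace ℝ (Fin d)) : ℝ :=
  1 / Real.sqrt (1 - ‖x‖ ^ 2 / s ^ 2)

/-- Poincaré distance `d_s(x,y) = 2s·arsinh(γ_x γ_y ‖x - y‖ / s)`. -/
noncomputable def dPoin {d : ℕ} (s : ℝ) (x y : EuclideanSpace ℝ (Fin d)) : ℝ :=
  2 * s * Real.arsinh (lorentzGamma s x * lorentzGamma s y * ‖x - y‖ / s)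

/-- Möbius addition on the Poincaré ball of radius `s`. -/
noncomputable def mobiusAdd {d : ℕ} (s : ℝ) (x y : EuclideanSpace ℝ (Fin d)) :
    EuclideanSpace ℝ (Fin d) :=
  ((1 + 2 / s ^ 2 * (inner ℝ x y : ℝ) + 1 / s ^ 2 * ‖y‖ ^ 2) /
      (1 + 2 / s ^ 2 * (inner ℝ x y : ℝ) + 1 / s ^ 4 * ‖x‖ ^ 2 * ‖y‖ ^ 2)) • x +
    ((1 - 1 / s ^ 2 * ‖x‖ ^ 2) /
      (1 + 2 / s ^ 2 * (inner ℝ x y : ℝ) + 1 / s ^ 4 * ‖x‖ ^ 2 * ‖y‖ ^ 2)) • y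

/-- Exponential map at the origin of the Poincaré ball of radius `s`. -/
noncomputable def expZero {d : ℕ} (s : ℝ) (v : EuclideanSpace ℝ (Fin d)) :
    EuclideanSpace ℝ (Fin d) :=
  (s * Real.tanh (‖v‖ / s) / ‖v‖) • v

/-- Logarithmic map at the origin of the Poincaré ball of radius `s`. -/
noncomputable def logZero {d : ℕ} (s : ℝ) (y : EuclideanSpace ℝ (Fin d)) :
    EuclideanSpace ℝ (Fin d) :=
  (s * Real.artanhAux (‖y‖ / s) / ‖y‖) • y


/- Integrate the AM-GM bound `(√(1+u²))⁻¹ ≤ (t/(1+u²) + 1/t)/2` over `[0, x]` to get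
`arsinh x ≤ (t arctan x + x/t)/2` for every `t > 0`; the optimal `t` gives the Cauchy–Schwarz bound
`arsinh x ≤ √(x arctan x)`, and `arctan x < π/2` finishes. -/

lemma inv_le_half_add_of_pos {s t : ℝ} (hs : 0 < s) (ht : 0 < t) :
    s⁻¹ ≤ (t / s ^ 2 + 1 / t) / 2 := by
  have key : (t / s ^ 2 + 1 / t) / 2 - s⁻¹ = (t - s) ^ 2 / (2 * t * s ^ 2) := by
    field_simp
    ring
  have : 0 ≤ (t - s) ^ 2 / (2 * t * s ^ 2) := by positivity
  linarith

lemma arsinh_le_half_mul_arctan_add {t : ℝ} (ht : 0 < t) {x : ℝ} (hx : 0 ≤ x) :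
    arsinh x ≤ (t * arctan x + x / t) / 2 := by
  let F : ℝ → ℝ := fun y ↦ (t * arctan y + y / t) / 2 - arsinh y
  have hF : ∀ y, HasDerivAt F ((t * (1 / (1 + y ^ 2)) + 1 / t) / 2 - (√(1 + y ^ 2))⁻¹) y :=
    fun y ↦ ((((hasDerivAt_arctan y).const_mul t).add
      ((hasDerivAt_id y).div_const t)).div_const 2).sub (hasDerivAt_arsinh y)
  have hF' : ∀ y : ℝ, 0 ≤ (t * (1 / (1 + y ^ 2)) + 1 / t) / 2 - (√(1 + y ^ 2))⁻¹ := by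
    intro y
    have h := inv_le_half_add_of_pos (sqrt_pos.2 (by positivity : (0 : ℝ) < 1 + y ^ 2)) ht
    rw [sq_sqrt (by positivity)] at h
    rw [mul_one_div]
    linarith
  have := monotone_of_hasDerivAt_nonneg hF hF' hx
  simp only [F, arctan_zero, arsinh_zero, mul_zero, zero_div, add_zero, sub_zero] at this
  linarith

lemma arsinh_le_sqrt_mul_arctan {x : ℝ} (hx : 0 ≤ x) : arsinh x ≤ √(x * arctan x) := by
  rcases hx.eq_or_lt with rfl | hx
  · simp
  set s := √(x * arctan x)
  have hA : 0 < arctan x := arctan_pos.2 hx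
  have hs : 0 < s := sqrt_pos.2 (mul_pos hx hA)
  have hs2 : s ^ 2 = x * arctan x := sq_sqrt (mul_pos hx hA).le
  calc arsinh x ≤ (s / arctan x * arctan x + x / (s / arctan x)) / 2 :=
        arsinh_le_half_mul_arctan_add (div_pos hs hA) hx.le
    _ = s := by
        field_simp
        rw [hs2]
        ring

/-- For all real `x ≥ 0` and `a ≥ 1`, `arsinh(x/a) ≤ √(πx/2)`. -/
theorem stmt0 (x a : ℝ) (hx : 0 ≤ x) (ha : 1 ≤ a) :
    Real.arsinh (x / a) ≤ Real.sqrt (Real.pi * x / 2) :=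
  calc arsinh (x / a) ≤ arsinh x := arsinh_le_arsinh.2 (div_le_self hx ha)
    _ ≤ √(x * arctan x) := arsinh_le_sqrt_mul_arctan hx
    _ ≤ √(π * x / 2) := sqrt_le_sqrt (by nlinarith [arctan_lt_pi_div_two x])
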